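/- Under the stated coordinate setup, the element 1⁺ (the image in A⁺ of the distinguished element 1 ∈ A) is a two-sided identity element of the algebra 𝔟 = 𝔞 ⊕ B ⊕ B', i.e. 1⁺x = x1⁺ = x for all x ∈ 𝔟. -/

import Mathlib

namespace WG

attribute [local instance] LieRing.ofAssociativeRing

variable (F : Type*) [Field F]
variable (L : Type*) [LieRing L] [LieAlgebra F L]

/-- The `α`-weight space of the `H`-module `L`:
`{x ∈ L | [h, x] = α(h) • x for all h ∈ H}`. -/
def wt (H : LieSubalgebra F L) (α : Module.Dual F H) : Submodule F L where
  carrier := {x | ∀ h : H, ⁅(h : L), x⁆ = α h • x}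
  add_mem' := by
    intro a b ha hb h
    rw [lie_add, ha h, hb h, smul_add]
  zero_mem' := by
    intro h
    rw [lie_zero, smul_zero]
  smul_mem' := by
    intro c x hx h
    rw [lie_smul, hx h]
    exact smul_comm c _ x

/-- The linear span of all brackets `⁅m, n⁆` with `m ∈ M`, `n ∈ N`. -/
def bracketSpan (M N : Submodule F L) : Submodule F L :=
  Submodule.span F {z | ∃ m ∈ M, ∃ n ∈ N, z = ⁅m, n⁆}

/-- `H` is a Cartan subalgebra of the subalgebra `g`: it is a nilpotent subalgebra of `g`
which is self-normalizing in `g`. -/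
def IsCartanIn (g H : LieSubalgebra F L) : Prop :=
  H ≤ g ∧ LieRing.IsNilpotent H ∧
    ∀ x ∈ g, (∀ h ∈ H, ⁅x, h⁆ ∈ H) → x ∈ H

/-- The set of roots of `g` relative to `H` (nonzero weights of the `H`-module `g`). -/
def rootSet (g H : LieSubalgebra F L) : Set (Module.Dual F H) :=
  {α | α ≠ 0 ∧ wt F L H α ⊓ g.toSubmodule ≠ ⊥}

/-- `H` is a splitting Cartan subalgebra of `g`: `g` is the sum of its `H`-weight spaces. -/
def IsSplitIn (g H : LieSubalgebra F L) : Prop :=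
  IsCartanIn F L g H ∧
    g.toSubmodule = ⨆ α : Module.Dual F H, (wt F L H α ⊓ g.toSubmodule)

/-- The Lie subalgebra `N` of `L` is `(Γ, g)`-pregraded relative to the
Cartan subalgebra `H` of `g`: conditions (Γ1) and (Γ2). -/
def IsPregraded (N g H : LieSubalgebra F L) (Γ : Set (Module.Dual F H)) : Prop :=
  g ≤ N ∧ IsCartanIn F L g H ∧ Γ.Finite ∧ (0 : Module.Dual F H) ∈ Γ ∧
    rootSet F L g H ⊆ Γ ∧
    N.toSubmodule = ⨆ α ∈ Γ, (wt F L H α ⊓ N.toSubmodule)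

/-- `Σ_{α, -α ∈ Γ \ {0}} ⁅N_α, N_{-α}⁆`. -/
def zeroPart (N H : LieSubalgebra F L) (Γ : Set (Module.Dual F H)) : Submodule F L :=
  ⨆ α ∈ {α ∈ Γ | α ≠ 0 ∧ -α ∈ Γ},
    bracketSpan F L (wt F L H α ⊓ N.toSubmodule) (wt F L H (-α) ⊓ N.toSubmodule)

/-- The Lie subalgebra `N` of `L` is `(Γ, g)`-graded: conditions (Γ1), (Γ2) and (Γ3). -/
def IsGraded (N g H : LieSubalgebra F L) (Γ : Set (Module.Dual F H)) : Prop :=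
  IsPregraded F L N g H Γ ∧
    wt F L H 0 ⊓ N.toSubmodule = zeroPart F L N H Γ

/-- The set of weights of the `H`-module `L`. -/
def weightSet (H : LieSubalgebra F L) : Set (Module.Dual F H) :=
  {α | wt F L H α ≠ ⊥}

/-- `sl_m(F)` realized as the trace-zero `m × m` matrices. -/
def slL (m : ℕ) : LieSubalgebra F (Matrix (Fin m) (Fin m) F) where
  carrier := {x | Matrix.trace x = 0}
  add_mem' := by
    intro a b ha hb
    simp only [Set.mem_setOf_eq] at *
    simp [Matrix.trace_add, ha, hb]
  zero_mem' := by simp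
  smul_mem' := by
    intro c x hx
    simp only [Set.mem_setOf_eq] at *
    simp [Matrix.trace_smul, hx]
  lie_mem' := by
    intro x y hx hy
    simp only [Set.mem_setOf_eq] at *
    rw [Ring.lie_def]
    simp [Matrix.trace_sub, Matrix.trace_mul_comm x y]

end WG
namespace WG

section WeightSets

variable {W : Type*} [AddCommGroup W] {r : ℕ}

/-- `{±δ_i ± δ_j | i ≠ j}`. -/
def pmSet (δ : Fin r → W) : Set W :=
  {α | ∃ i j, i ≠ j ∧
    (α = δ i + δ j ∨ α = δ i - δ j ∨ α = -δ i + δ j ∨ α = -δ i - δ j)}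

/-- `{±δ_i}`. -/
def shortSet (δ : Fin r → W) : Set W :=
  {α | ∃ i, α = δ i ∨ α = -δ i}

/-- `{±2δ_i}`. -/
def longSet (δ : Fin r → W) : Set W :=
  {α | ∃ i, α = δ i + δ i ∨ α = -(δ i + δ i)}

/-- The weight set `{0, ±δ_i ± δ_j, ±δ_i, ±2δ_i | i ≠ j}`.  For the weights
`ε_1, …, ε_{n+1}` of the natural `sl_{n+1}`-module this is the set `Â_n`; for a basis
`δ_1, …, δ_r` it is the set `BC_r ∪ {0}`. -/
def hatSet (δ : Fin r → W) : Set W :=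
  {0} ∪ pmSet δ ∪ shortSet δ ∪ longSet δ

/-- The root system of type `A` in the weights `ε_i`: `{ε_i - ε_j | i ≠ j}`. -/
def aRoots (ε : Fin r → W) : Set W :=
  {α | ∃ i j, i ≠ j ∧ α = ε i - ε j}

/-- The root system of type `B_r`: `{±δ_i ± δ_j, ±δ_i | i ≠ j}`. -/
def bRoots (δ : Fin r → W) : Set W := pmSet δ ∪ shortSet δ

/-- The root system of type `C_r`: `{±δ_i ± δ_j, ±2δ_i | i ≠ j}`. -/
def cRoots (δ : Fin r → W) : Set W := pmSet δ ∪ longSet δ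

/-- The root system of type `D_r`: `{±δ_i ± δ_j | i ≠ j}`. -/
def dRoots (δ : Fin r → W) : Set W := pmSet δ

end WeightSets

section MatrixModules

open Matrix

variable (F : Type*) [Field F] (m : ℕ)

/-- The symmetric `m × m` matrices. -/
def symM : Submodule F (Matrix (Fin m) (Fin m) F) where
  carrier := {x | xᵀ = x}
  add_mem' := by
    intro a b ha hb
    simp only [Set.mem_setOf_eq] at *
    simp [Matrix.transpose_add, ha, hb]
  zero_mem' := by simp
  smul_mem' := by
    intro c x hx
    simp only [Set.mem_setOf_eq] at *
    simp [Matrix.transpose_smul, hx]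

/-- The skew-symmetric `m × m` matrices. -/
def skewM : Submodule F (Matrix (Fin m) (Fin m) F) where
  carrier := {x | xᵀ = -x}
  add_mem' := by
    intro a b ha hb
    simp only [Set.mem_setOf_eq] at *
    simp [Matrix.transpose_add, ha, hb]
    abel
  zero_mem' := by simp
  smul_mem' := by
    intro c x hx
    simp only [Set.mem_setOf_eq] at *
    simp [Matrix.transpose_smul, hx]

variable {F m}

/-- The action `x.s = xs + sxᵗ` of `sl_m` on symmetric matrices. -/
def symAct (x : Matrix (Fin m) (Fin m) F) (s : symM F m) : symM F m :=
  ⟨x * s + (s : Matrix (Fin m) (Fin m) F) * xᵀ, by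
    have hs : (s : Matrix (Fin m) (Fin m) F)ᵀ = s := s.2
    show (x * (s : Matrix (Fin m) (Fin m) F) + (s : Matrix (Fin m) (Fin m) F) * xᵀ)ᵀ = _
    simp [Matrix.transpose_add, Matrix.transpose_mul, hs, add_comm]⟩

/-- `xs - sxᵗ` is skew-symmetric for `s` symmetric. -/
def symActSkew (x : Matrix (Fin m) (Fin m) F) (s : symM F m) : skewM F m :=
  ⟨x * s - (s : Matrix (Fin m) (Fin m) F) * xᵀ, by
    have hs : (s : Matrix (Fin m) (Fin m) F)ᵀ = s := s.2
    show (x * (s : Matrix (Fin m) (Fin m) F) - (s : Matrix (Fin m) (Fin m) F) * xᵀ)ᵀ = _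
    simp [Matrix.transpose_sub, Matrix.transpose_mul, hs, neg_sub]⟩

/-- The action `x.λ = xλ + λxᵗ` of `sl_m` on skew-symmetric matrices. -/
def skewAct (x : Matrix (Fin m) (Fin m) F) (l : skewM F m) : skewM F m :=
  ⟨x * l + (l : Matrix (Fin m) (Fin m) F) * xᵀ, by
    have hl : (l : Matrix (Fin m) (Fin m) F)ᵀ = -l := l.2
    show (x * (l : Matrix (Fin m) (Fin m) F) + (l : Matrix (Fin m) (Fin m) F) * xᵀ)ᵀ = _
    simp only [Matrix.transpose_add, Matrix.transpose_mul, Matrix.transpose_transpose, hl,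
      Matrix.neg_mul, Matrix.mul_neg, neg_add_rev]
    try abel⟩

/-- `xλ - λxᵗ` is symmetric for `λ` skew-symmetric. -/
def skewActSym (x : Matrix (Fin m) (Fin m) F) (l : skewM F m) : symM F m :=
  ⟨x * l - (l : Matrix (Fin m) (Fin m) F) * xᵀ, by
    have hl : (l : Matrix (Fin m) (Fin m) F)ᵀ = -l := l.2
    show (x * (l : Matrix (Fin m) (Fin m) F) - (l : Matrix (Fin m) (Fin m) F) * xᵀ)ᵀ = _
    simp only [Matrix.transpose_sub, Matrix.transpose_mul, Matrix.transpose_transpose, hl,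
      Matrix.neg_mul, Matrix.mul_neg, sub_neg_eq_add, neg_sub]
    try abel⟩

/-- `s'x + xᵗs'` (symmetric). -/
def symActR (s' : symM F m) (x : Matrix (Fin m) (Fin m) F) : symM F m :=
  ⟨(s' : Matrix (Fin m) (Fin m) F) * x + xᵀ * s', by
    have hs : (s' : Matrix (Fin m) (Fin m) F)ᵀ = s' := s'.2
    show ((s' : Matrix (Fin m) (Fin m) F) * x + xᵀ * (s' : Matrix (Fin m) (Fin m) F))ᵀ = _
    simp [Matrix.transpose_add, Matrix.transpose_mul, hs, add_comm]⟩

/-- `s'x - xᵗs'` (skew-symmetric). -/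
def symActRSkew (s' : symM F m) (x : Matrix (Fin m) (Fin m) F) : skewM F m :=
  ⟨(s' : Matrix (Fin m) (Fin m) F) * x - xᵀ * s', by
    have hs : (s' : Matrix (Fin m) (Fin m) F)ᵀ = s' := s'.2
    show ((s' : Matrix (Fin m) (Fin m) F) * x - xᵀ * (s' : Matrix (Fin m) (Fin m) F))ᵀ = _
    simp [Matrix.transpose_sub, Matrix.transpose_mul, hs, neg_sub]⟩

/-- `λ'x + xᵗλ'` (skew-symmetric). -/
def skewActR (l' : skewM F m) (x : Matrix (Fin m) (Fin m) F) : skewM F m :=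
  ⟨(l' : Matrix (Fin m) (Fin m) F) * x + xᵀ * l', by
    have hl : (l' : Matrix (Fin m) (Fin m) F)ᵀ = -l' := l'.2
    show ((l' : Matrix (Fin m) (Fin m) F) * x + xᵀ * (l' : Matrix (Fin m) (Fin m) F))ᵀ = _
    simp only [Matrix.transpose_add, Matrix.transpose_mul, Matrix.transpose_transpose, hl,
      Matrix.neg_mul, Matrix.mul_neg, neg_add_rev]
    try abel⟩

/-- `λ'x - xᵗλ'` (symmetric). -/
def skewActRSym (l' : skewM F m) (x : Matrix (Fin m) (Fin m) F) : symM F m :=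
  ⟨(l' : Matrix (Fin m) (Fin m) F) * x - xᵀ * l', by
    have hl : (l' : Matrix (Fin m) (Fin m) F)ᵀ = -l' := l'.2
    show ((l' : Matrix (Fin m) (Fin m) F) * x - xᵀ * (l' : Matrix (Fin m) (Fin m) F))ᵀ = _
    simp only [Matrix.transpose_sub, Matrix.transpose_mul, Matrix.transpose_transpose, hl,
      Matrix.neg_mul, Matrix.mul_neg, sub_neg_eq_add, neg_sub]
    try abel⟩

end MatrixModules

end WG
namespace WG

attribute [local instance] LieRing.ofAssociativeRing

open Matrix

set_option maxHeartbeats 1000000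

/-- `(n+1) × (n+1)` matrices over `F`. -/
abbrev MatN (F : Type*) [Field F] (n : ℕ) := Matrix (Fin (n + 1)) (Fin (n + 1)) F

theorem nsucc_ne_zero (F : Type*) [Field F] [CharZero F] (n : ℕ) :
    ((n + 1 : ℕ) : F) ≠ 0 :=
  Nat.cast_ne_zero.mpr (Nat.succ_ne_zero n)

section CoordHelpers

variable {F : Type*} [Field F] [CharZero F] {n : ℕ}

/-- The trace-zero projection `m ↦ m - (tr m / (n+1)) • 1`. -/
def projSl (m : MatN F n) : slL F (n + 1) :=
  ⟨m - (Matrix.trace m / ((n + 1 : ℕ) : F)) • (1 : MatN F n), by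
    show Matrix.trace _ = 0
    rw [Matrix.trace_sub, Matrix.trace_smul, Matrix.trace_one, Fintype.card_fin,
      smul_eq_mul, div_mul_cancel₀ _ (nsucc_ne_zero F n), sub_self]⟩

/-- `x ∘ y = xy + yx - (2/(n+1)) tr(xy) • 1`. -/
def circSl (x y : slL F (n + 1)) : slL F (n + 1) :=
  projSl ((x : MatN F n) * (y : MatN F n) + (y : MatN F n) * (x : MatN F n))

/-- `(x | y) = tr(xy)/(n+1)`. -/
def traceF (x y : MatN F n) : F :=
  Matrix.trace (x * y) / ((n + 1 : ℕ) : F)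

/-- `uvᵗ + vuᵗ` (symmetric). -/
def symVV (u v : Fin (n + 1) → F) : symM F (n + 1) :=
  ⟨Matrix.vecMulVec u v + Matrix.vecMulVec v u, by
    show _ᵀ = _
    ext i j
    simp only [Matrix.transpose_apply, Matrix.add_apply, Matrix.vecMulVec_apply]
    ring⟩

/-- `uvᵗ - vuᵗ` (skew-symmetric). -/
def skewVV (u v : Fin (n + 1) → F) : skewM F (n + 1) :=
  ⟨Matrix.vecMulVec u v - Matrix.vecMulVec v u, by
    show _ᵀ = _
    ext i j
    simp only [Matrix.transpose_apply, Matrix.sub_apply, Matrix.vecMulVec_apply,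
      Matrix.neg_apply]
    ring⟩

end CoordHelpers

section TotalMap

open scoped TensorProduct

variable {F : Type*} [Field F] [CharZero F] {n : ℕ}
variable {A B B' C C' E E' D L : Type*}
variable [AddCommGroup A] [Module F A] [AddCommGroup B] [Module F B]
variable [AddCommGroup B'] [Module F B'] [AddCommGroup C] [Module F C]
variable [AddCommGroup C'] [Module F C'] [AddCommGroup E] [Module F E]
variable [AddCommGroup E'] [Module F E'] [AddCommGroup D] [Module F D]
variable [LieRing L] [LieAlgebra F L]

/-- The total linear map
`(g ⊗ A) × (V ⊗ B) × (V' ⊗ B') × (S ⊗ C) × (S' ⊗ C') × (Λ ⊗ E) × (Λ' ⊗ E') × D → L`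
assembled from the structure maps of the decomposition (1.1). -/
noncomputable def totalMap
    (ιg : slL F (n + 1) →ₗ[F] A →ₗ[F] L)
    (ιV : (Fin (n + 1) → F) →ₗ[F] B →ₗ[F] L)
    (ιV' : (Fin (n + 1) → F) →ₗ[F] B' →ₗ[F] L)
    (ιS : symM F (n + 1) →ₗ[F] C →ₗ[F] L)
    (ιS' : symM F (n + 1) →ₗ[F] C' →ₗ[F] L)
    (ιE : skewM F (n + 1) →ₗ[F] E →ₗ[F] L)
    (ιE' : skewM F (n + 1) →ₗ[F] E' →ₗ[F] L)
    (ιD : D →ₗ[F] L) :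
    ((↥(slL F (n + 1)) ⊗[F] A) × ((Fin (n + 1) → F) ⊗[F] B) × ((Fin (n + 1) → F) ⊗[F] B') ×
      (↥(symM F (n + 1)) ⊗[F] C) × (↥(symM F (n + 1)) ⊗[F] C') ×
      (↥(skewM F (n + 1)) ⊗[F] E) × (↥(skewM F (n + 1)) ⊗[F] E') × D) →ₗ[F] L :=
  (TensorProduct.lift ιg).coprod <| (TensorProduct.lift ιV).coprod <|
    (TensorProduct.lift ιV').coprod <| (TensorProduct.lift ιS).coprod <|
    (TensorProduct.lift ιS').coprod <| (TensorProduct.lift ιE).coprod <|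
    (TensorProduct.lift ιE').coprod ιD

end TotalMap

end WG
namespace WG

attribute [local instance] LieRing.ofAssociativeRing

open Matrix

set_option maxHeartbeats 2000000

/-- The coordinate setup for an `Â_n`-graded Lie algebra `L` (for `n ≥ 6`, or
`n ∈ {4,5}` together with the conditions (1.2), which here appear as the fields
`zero_LL`, `zero_L'L'`, `zero_LV` and `zero_L'V'`):
`L = g⊗A ⊕ V⊗B ⊕ V'⊗B' ⊕ S⊗C ⊕ S'⊗C' ⊕ Λ⊗E ⊕ Λ'⊗E' ⊕ D` with `g = sl_{n+1}`,
with the Lie bracket of `L` given on the components by the formulas (5.1). -/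
structure CoordSetup (F : Type*) [Field F] [CharZero F] (n : ℕ)
    (A B B' C C' E E' D L : Type*)
    [AddCommGroup A] [Module F A] [AddCommGroup B] [Module F B]
    [AddCommGroup B'] [Module F B'] [AddCommGroup C] [Module F C]
    [AddCommGroup C'] [Module F C'] [AddCommGroup E] [Module F E]
    [AddCommGroup E'] [Module F E'] [AddCommGroup D] [Module F D]
    [LieRing L] [LieAlgebra F L] : Type _ where
  -- the bilinear products among the multiplicity spaces (Table 3)
  circA : A →ₗ[F] A →ₗ[F] A            -- `a₁ ∘ a₂`
  brA : A →ₗ[F] A →ₗ[F] A              -- `[a₁, a₂]`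
  dA : A →ₗ[F] A →ₗ[F] D               -- `⟨a₁, a₂⟩`
  pAB : A →ₗ[F] B →ₗ[F] B              -- `(a, b)_B`
  pB'A : B' →ₗ[F] A →ₗ[F] B'           -- `(b', a)_{B'}`
  pBB'A : B →ₗ[F] B' →ₗ[F] A           -- `(b, b')_A`
  dBB' : B →ₗ[F] B' →ₗ[F] D            -- `⟨b, b'⟩`
  pBBC : B →ₗ[F] B →ₗ[F] C             -- `(b₁, b₂)_C`
  pBBE : B →ₗ[F] B →ₗ[F] E             -- `(b₁, b₂)_E`
  pB'B'C' : B' →ₗ[F] B' →ₗ[F] C'       -- `(b₁', b₂')_{C'}`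
  pB'B'E' : B' →ₗ[F] B' →ₗ[F] E'       -- `(b₁', b₂')_{E'}`
  pACC : A →ₗ[F] C →ₗ[F] C             -- `(a, c)_C`
  pACE : A →ₗ[F] C →ₗ[F] E             -- `(a, c)_E`
  pAEE : A →ₗ[F] E →ₗ[F] E             -- `(a, e)_E`
  pAEC : A →ₗ[F] E →ₗ[F] C             -- `(a, e)_C`
  pC'AC' : C' →ₗ[F] A →ₗ[F] C'         -- `(c', a)_{C'}`
  pC'AE' : C' →ₗ[F] A →ₗ[F] E'         -- `(c', a)_{E'}`
  pE'AE' : E' →ₗ[F] A →ₗ[F] E'         -- `(e', a)_{E'}`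
  pE'AC' : E' →ₗ[F] A →ₗ[F] C'         -- `(e', a)_{C'}`
  pCC'A : C →ₗ[F] C' →ₗ[F] A           -- `(c, c')_A`
  dCC' : C →ₗ[F] C' →ₗ[F] D            -- `⟨c, c'⟩`
  pEE'A : E →ₗ[F] E' →ₗ[F] A           -- `(e, e')_A`
  dEE' : E →ₗ[F] E' →ₗ[F] D            -- `⟨e, e'⟩`
  pCE'A : C →ₗ[F] E' →ₗ[F] A           -- `(c, e')_A`
  pC'EA : C' →ₗ[F] E →ₗ[F] A           -- `(c', e)_A`
  pC'B : C' →ₗ[F] B →ₗ[F] B'           -- `(c', b)_{B'}`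
  pE'B : E' →ₗ[F] B →ₗ[F] B'           -- `(e', b)_{B'}`
  pB'C : B' →ₗ[F] C →ₗ[F] B            -- `(b', c)_B`
  pB'E : B' →ₗ[F] E →ₗ[F] B            -- `(b', e)_B`
  dActA : D →ₗ[F] A →ₗ[F] A            -- the action of `D` on `A`
  dActB : D →ₗ[F] B →ₗ[F] B
  dActB' : D →ₗ[F] B' →ₗ[F] B'
  dActC : D →ₗ[F] C →ₗ[F] C
  dActC' : D →ₗ[F] C' →ₗ[F] C'
  dActE : D →ₗ[F] E →ₗ[F] E
  dActE' : D →ₗ[F] E' →ₗ[F] E'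
  dD : D →ₗ[F] D →ₗ[F] D
  -- the distinguished element `1 ∈ A` with `g = g ⊗ 1`
  one : A
  -- the components of the decomposition (1.1), as bilinear maps into `L`
  ιg : slL F (n + 1) →ₗ[F] A →ₗ[F] L
  ιV : (Fin (n + 1) → F) →ₗ[F] B →ₗ[F] L
  ιV' : (Fin (n + 1) → F) →ₗ[F] B' →ₗ[F] L
  ιS : symM F (n + 1) →ₗ[F] C →ₗ[F] L
  ιS' : symM F (n + 1) →ₗ[F] C' →ₗ[F] L
  ιE : skewM F (n + 1) →ₗ[F] E →ₗ[F] L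
  ιE' : skewM F (n + 1) →ₗ[F] E' →ₗ[F] L
  ιD : D →ₗ[F] L
  -- the decomposition (1.1) is a direct sum decomposition of `L`
  bij : Function.Bijective (totalMap ιg ιV ιV' ιS ιS' ιE ιE' ιD)
  -- the multiplication formulas (5.1)
  rel_gg : ∀ (x y : slL F (n + 1)) (a₁ a₂ : A),
    ⁅ιg x a₁, ιg y a₂⁆ =
      ιg (circSl x y) ((2⁻¹ : F) • brA a₁ a₂) + ιg ⁅x, y⁆ ((2⁻¹ : F) • circA a₁ a₂) +
        ιD (traceF (x : MatN F n) (y : MatN F n) • dA a₁ a₂)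
  rel_VV' : ∀ (u v' : Fin (n + 1) → F) (b : B) (b' : B'),
    ⁅ιV u b, ιV' v' b'⁆ =
      ιg (projSl (Matrix.vecMulVec u v')) (pBB'A b b') +
        ιD ((Matrix.trace (Matrix.vecMulVec u v') / ((n + 1 : ℕ) : F)) • dBB' b b')
  rel_SS' : ∀ (s s' : symM F (n + 1)) (c : C) (c' : C'),
    ⁅ιS s c, ιS' s' c'⁆ =
      ιg (projSl ((s : MatN F n) * (s' : MatN F n))) (pCC'A c c') +
        ιD (traceF (s : MatN F n) (s' : MatN F n) • dCC' c c')
  rel_LL' : ∀ (l l' : skewM F (n + 1)) (e : E) (e' : E'),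
    ⁅ιE l e, ιE' l' e'⁆ =
      ιg (projSl ((l : MatN F n) * (l' : MatN F n))) (pEE'A e e') +
        ιD (traceF (l : MatN F n) (l' : MatN F n) • dEE' e e')
  rel_VV : ∀ (u v : Fin (n + 1) → F) (b₁ b₂ : B),
    ⁅ιV u b₁, ιV v b₂⁆ =
      ιS (symVV u v) ((2⁻¹ : F) • pBBC b₁ b₂) + ιE (skewVV u v) ((2⁻¹ : F) • pBBE b₁ b₂)
  rel_V'V' : ∀ (u' v' : Fin (n + 1) → F) (b₁' b₂' : B'),
    ⁅ιV' u' b₁', ιV' v' b₂'⁆ =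
      ιS' (symVV u' v') ((2⁻¹ : F) • pB'B'C' b₁' b₂') +
        ιE' (skewVV u' v') ((2⁻¹ : F) • pB'B'E' b₁' b₂')
  rel_gS : ∀ (x : slL F (n + 1)) (a : A) (s : symM F (n + 1)) (c : C),
    ⁅ιg x a, ιS s c⁆ =
      ιS (symAct (x : MatN F n) s) ((2⁻¹ : F) • pACC a c) +
        ιE (symActSkew (x : MatN F n) s) ((2⁻¹ : F) • pACE a c)
  rel_gL : ∀ (x : slL F (n + 1)) (a : A) (l : skewM F (n + 1)) (e : E),
    ⁅ιg x a, ιE l e⁆ =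
      ιE (skewAct (x : MatN F n) l) ((2⁻¹ : F) • pAEE a e) +
        ιS (skewActSym (x : MatN F n) l) ((2⁻¹ : F) • pAEC a e)
  rel_S'g : ∀ (s' : symM F (n + 1)) (c' : C') (x : slL F (n + 1)) (a : A),
    ⁅ιS' s' c', ιg x a⁆ =
      ιS' (symActR s' (x : MatN F n)) ((2⁻¹ : F) • pC'AC' c' a) +
        ιE' (symActRSkew s' (x : MatN F n)) ((2⁻¹ : F) • pC'AE' c' a)
  rel_L'g : ∀ (l' : skewM F (n + 1)) (e' : E') (x : slL F (n + 1)) (a : A),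
    ⁅ιE' l' e', ιg x a⁆ =
      ιE' (skewActR l' (x : MatN F n)) ((2⁻¹ : F) • pE'AE' e' a) +
        ιS' (skewActRSym l' (x : MatN F n)) ((2⁻¹ : F) • pE'AC' e' a)
  rel_SL' : ∀ (s : symM F (n + 1)) (c : C) (l' : skewM F (n + 1)) (e' : E'),
    ⁅ιS s c, ιE' l' e'⁆ = ιg (projSl ((s : MatN F n) * (l' : MatN F n))) (pCE'A c e')
  rel_S'L : ∀ (s' : symM F (n + 1)) (c' : C') (l : skewM F (n + 1)) (e : E),
    ⁅ιS' s' c', ιE l e⁆ = ιg (projSl ((s' : MatN F n) * (l : MatN F n))) (pC'EA c' e)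
  rel_gV : ∀ (x : slL F (n + 1)) (a : A) (u : Fin (n + 1) → F) (b : B),
    ⁅ιg x a, ιV u b⁆ = ιV ((x : MatN F n) *ᵥ u) (pAB a b)
  rel_S'V : ∀ (s' : symM F (n + 1)) (c' : C') (u : Fin (n + 1) → F) (b : B),
    ⁅ιS' s' c', ιV u b⁆ = ιV' ((s' : MatN F n) *ᵥ u) (pC'B c' b)
  rel_L'V : ∀ (l' : skewM F (n + 1)) (e' : E') (u : Fin (n + 1) → F) (b : B),
    ⁅ιE' l' e', ιV u b⁆ = ιV' ((l' : MatN F n) *ᵥ u) (pE'B e' b)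
  rel_V'g : ∀ (u' : Fin (n + 1) → F) (b' : B') (x : slL F (n + 1)) (a : A),
    ⁅ιV' u' b', ιg x a⁆ = ιV' ((x : MatN F n)ᵀ *ᵥ u') (pB'A b' a)
  rel_V'S : ∀ (u' : Fin (n + 1) → F) (b' : B') (s : symM F (n + 1)) (c : C),
    ⁅ιV' u' b', ιS s c⁆ = ιV ((s : MatN F n) *ᵥ u') (pB'C b' c)
  rel_V'L : ∀ (u' : Fin (n + 1) → F) (b' : B') (l : skewM F (n + 1)) (e : E),
    ⁅ιV' u' b', ιE l e⁆ = -ιV ((l : MatN F n) *ᵥ u') (pB'E b' e)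
  -- the action of `D`
  rel_Dg : ∀ (d : D) (x : slL F (n + 1)) (a : A), ⁅ιD d, ιg x a⁆ = ιg x (dActA d a)
  rel_DV : ∀ (d : D) (u : Fin (n + 1) → F) (b : B), ⁅ιD d, ιV u b⁆ = ιV u (dActB d b)
  rel_DV' : ∀ (d : D) (u' : Fin (n + 1) → F) (b' : B'),
    ⁅ιD d, ιV' u' b'⁆ = ιV' u' (dActB' d b')
  rel_DS : ∀ (d : D) (s : symM F (n + 1)) (c : C), ⁅ιD d, ιS s c⁆ = ιS s (dActC d c)
  rel_DS' : ∀ (d : D) (s' : symM F (n + 1)) (c' : C'),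
    ⁅ιD d, ιS' s' c'⁆ = ιS' s' (dActC' d c')
  rel_DL : ∀ (d : D) (l : skewM F (n + 1)) (e : E), ⁅ιD d, ιE l e⁆ = ιE l (dActE d e)
  rel_DL' : ∀ (d : D) (l' : skewM F (n + 1)) (e' : E'),
    ⁅ιD d, ιE' l' e'⁆ = ιE' l' (dActE' d e')
  rel_DD : ∀ d₁ d₂ : D, ⁅ιD d₁, ιD d₂⁆ = ιD (dD d₁ d₂)
  -- all other products of homogeneous components are zero
  zero_SS : ∀ (s t : symM F (n + 1)) (c₁ c₂ : C), ⁅ιS s c₁, ιS t c₂⁆ = 0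
  zero_SL : ∀ (s : symM F (n + 1)) (c : C) (l : skewM F (n + 1)) (e : E),
    ⁅ιS s c, ιE l e⁆ = 0
  zero_LL : ∀ (l₁ l₂ : skewM F (n + 1)) (e₁ e₂ : E), ⁅ιE l₁ e₁, ιE l₂ e₂⁆ = 0
  zero_S'S' : ∀ (s' t' : symM F (n + 1)) (c₁' c₂' : C'), ⁅ιS' s' c₁', ιS' t' c₂'⁆ = 0
  zero_S'L' : ∀ (s' : symM F (n + 1)) (c' : C') (l' : skewM F (n + 1)) (e' : E'),
    ⁅ιS' s' c', ιE' l' e'⁆ = 0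
  zero_L'L' : ∀ (l₁' l₂' : skewM F (n + 1)) (e₁' e₂' : E'),
    ⁅ιE' l₁' e₁', ιE' l₂' e₂'⁆ = 0
  zero_SV : ∀ (s : symM F (n + 1)) (c : C) (u : Fin (n + 1) → F) (b : B),
    ⁅ιS s c, ιV u b⁆ = 0
  zero_LV : ∀ (l : skewM F (n + 1)) (e : E) (u : Fin (n + 1) → F) (b : B),
    ⁅ιE l e, ιV u b⁆ = 0
  zero_S'V' : ∀ (s' : symM F (n + 1)) (c' : C') (u' : Fin (n + 1) → F) (b' : B'),
    ⁅ιS' s' c', ιV' u' b'⁆ = 0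
  zero_L'V' : ∀ (l' : skewM F (n + 1)) (e' : E') (u' : Fin (n + 1) → F) (b' : B'),
    ⁅ιE' l' e', ιV' u' b'⁆ = 0
  -- `g = g ⊗ 1`: the subalgebra `g` acts through the distinguished element `1 ∈ A`
  one_gg : ∀ (x y : slL F (n + 1)) (a : A), ⁅ιg x one, ιg y a⁆ = ιg ⁅x, y⁆ a
  one_gV : ∀ (x : slL F (n + 1)) (u : Fin (n + 1) → F) (b : B),
    ⁅ιg x one, ιV u b⁆ = ιV ((x : MatN F n) *ᵥ u) b
  one_gV' : ∀ (x : slL F (n + 1)) (u' : Fin (n + 1) → F) (b' : B'),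
    ⁅ιg x one, ιV' u' b'⁆ = -ιV' ((x : MatN F n)ᵀ *ᵥ u') b'
  one_gS : ∀ (x : slL F (n + 1)) (s : symM F (n + 1)) (c : C),
    ⁅ιg x one, ιS s c⁆ = ιS (symAct (x : MatN F n) s) c
  one_gL : ∀ (x : slL F (n + 1)) (l : skewM F (n + 1)) (e : E),
    ⁅ιg x one, ιE l e⁆ = ιE (skewAct (x : MatN F n) l) e
  one_gS' : ∀ (x : slL F (n + 1)) (s' : symM F (n + 1)) (c' : C'),
    ⁅ιg x one, ιS' s' c'⁆ = -ιS' (symActR s' (x : MatN F n)) c'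
  one_gL' : ∀ (x : slL F (n + 1)) (l' : skewM F (n + 1)) (e' : E'),
    ⁅ιg x one, ιE' l' e'⁆ = -ιE' (skewActR l' (x : MatN F n)) e'

end WG
namespace WG

set_option maxHeartbeats 2000000

/-- The underlying space of the coordinate algebra `𝔞 = A⁺ ⊕ A⁻ ⊕ C ⊕ E ⊕ C' ⊕ E'`. -/
abbrev CoorA (A C E C' E' : Type*) := A × A × C × E × C' × E'

/-- The underlying space of the coordinate algebra
`𝔟 = 𝔞 ⊕ B ⊕ B' = A⁺ ⊕ A⁻ ⊕ C ⊕ E ⊕ C' ⊕ E' ⊕ B ⊕ B'`. -/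
abbrev CoorB (A C E C' E' B B' : Type*) := A × A × C × E × C' × E' × B × B'

section CoordAlgebra

variable {F : Type*} [Field F] [CharZero F] {n : ℕ}
variable {A B B' C C' E E' D L : Type*}
variable [AddCommGroup A] [Module F A] [AddCommGroup B] [Module F B]
variable [AddCommGroup B'] [Module F B'] [AddCommGroup C] [Module F C]
variable [AddCommGroup C'] [Module F C'] [AddCommGroup E] [Module F E]
variable [AddCommGroup E'] [Module F E'] [AddCommGroup D] [Module F D]
variable [LieRing L] [LieAlgebra F L]

/-- The multiplication `α₁α₂ = ½[α₁,α₂] + ½(α₁∘α₂)` of the coordinate algebra `𝔟`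
(Tables 4 and 5). -/
def bMul (S : CoordSetup F n A B B' C C' E E' D L) :
    CoorB A C E C' E' B B' → CoorB A C E C' E' B B' → CoorB A C E C' E' B B' :=
  fun x y =>
    match x, y with
    | (a1p, a1m, c1, e1, c1', e1', b1, b1'), (a2p, a2m, c2, e2, c2', e2', b2, b2') =>
      ((2⁻¹ : F) • (S.circA a1p a2p + S.circA a1m a2m + S.brA a1p a2m + S.brA a1m a2p +
          S.pCC'A c1 c2' + S.pCC'A c2 c1' + S.pEE'A e1 e2' + S.pEE'A e2 e1' +
          S.pCE'A c1 e2' - S.pCE'A c2 e1' + S.pC'EA c1' e2 - S.pC'EA c2' e1 +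
          S.pBB'A b1 b2' + S.pBB'A b2 b1'),
       (2⁻¹ : F) • (S.brA a1p a2p + S.brA a1m a2m + S.circA a1p a2m + S.circA a1m a2p +
          S.pCC'A c1 c2' - S.pCC'A c2 c1' + S.pEE'A e1 e2' - S.pEE'A e2 e1' +
          S.pCE'A c1 e2' + S.pCE'A c2 e1' + S.pC'EA c1' e2 + S.pC'EA c2' e1 +
          S.pBB'A b1 b2' - S.pBB'A b2 b1'),
       (2⁻¹ : F) • (S.pACC a1p c2 + S.pACC a1m c2 + S.pACC a2p c1 - S.pACC a2m c1 +
          S.pAEC a1p e2 + S.pAEC a1m e2 - S.pAEC a2p e1 + S.pAEC a2m e1 +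
          S.pBBC b1 b2),
       (2⁻¹ : F) • (S.pACE a1p c2 + S.pACE a1m c2 - S.pACE a2p c1 + S.pACE a2m c1 +
          S.pAEE a1p e2 + S.pAEE a1m e2 + S.pAEE a2p e1 - S.pAEE a2m e1 +
          S.pBBE b1 b2),
       (2⁻¹ : F) • (S.pC'AC' c1' a2m + S.pC'AC' c1' a2p - S.pC'AC' c2' a1m +
          S.pC'AC' c2' a1p + S.pE'AC' e1' a2m + S.pE'AC' e1' a2p + S.pE'AC' e2' a1m -
          S.pE'AC' e2' a1p + S.pB'B'C' b1' b2'),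
       (2⁻¹ : F) • (S.pC'AE' c1' a2m + S.pC'AE' c1' a2p + S.pC'AE' c2' a1m -
          S.pC'AE' c2' a1p + S.pE'AE' e1' a2m + S.pE'AE' e1' a2p - S.pE'AE' e2' a1m +
          S.pE'AE' e2' a1p + S.pB'B'E' b1' b2'),
       S.pAB a1p b2 + S.pAB a1m b2 + S.pAB a2p b1 - S.pAB a2m b1 +
         S.pB'C b1' c2 + S.pB'E b1' e2 - S.pB'C b2' c1 + S.pB'E b2' e1,
       S.pC'B c1' b2 + S.pE'B e1' b2 - S.pC'B c2' b1 + S.pE'B e2' b1 +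
         S.pB'A b1' a2p + S.pB'A b1' a2m + S.pB'A b2' a1p - S.pB'A b2' a1m)

/-- The multiplication of the coordinate algebra `𝔞` (Table 4): the restriction of the
multiplication of `𝔟`. -/
def aMul (S : CoordSetup F n A B B' C C' E E' D L) :
    CoorA A C E C' E' → CoorA A C E C' E' → CoorA A C E C' E' :=
  fun x y =>
    match x, y with
    | (a1p, a1m, c1, e1, c1', e1'), (a2p, a2m, c2, e2, c2', e2') =>
      ((2⁻¹ : F) • (S.circA a1p a2p + S.circA a1m a2m + S.brA a1p a2m + S.brA a1m a2p +
          S.pCC'A c1 c2' + S.pCC'A c2 c1' + S.pEE'A e1 e2' + S.pEE'A e2 e1' +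
          S.pCE'A c1 e2' - S.pCE'A c2 e1' + S.pC'EA c1' e2 - S.pC'EA c2' e1),
       (2⁻¹ : F) • (S.brA a1p a2p + S.brA a1m a2m + S.circA a1p a2m + S.circA a1m a2p +
          S.pCC'A c1 c2' - S.pCC'A c2 c1' + S.pEE'A e1 e2' - S.pEE'A e2 e1' +
          S.pCE'A c1 e2' + S.pCE'A c2 e1' + S.pC'EA c1' e2 + S.pC'EA c2' e1),
       (2⁻¹ : F) • (S.pACC a1p c2 + S.pACC a1m c2 + S.pACC a2p c1 - S.pACC a2m c1 +
          S.pAEC a1p e2 + S.pAEC a1m e2 - S.pAEC a2p e1 + S.pAEC a2m e1),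
       (2⁻¹ : F) • (S.pACE a1p c2 + S.pACE a1m c2 - S.pACE a2p c1 + S.pACE a2m c1 +
          S.pAEE a1p e2 + S.pAEE a1m e2 + S.pAEE a2p e1 - S.pAEE a2m e1),
       (2⁻¹ : F) • (S.pC'AC' c1' a2m + S.pC'AC' c1' a2p - S.pC'AC' c2' a1m +
          S.pC'AC' c2' a1p + S.pE'AC' e1' a2m + S.pE'AC' e1' a2p + S.pE'AC' e2' a1m -
          S.pE'AC' e2' a1p),
       (2⁻¹ : F) • (S.pC'AE' c1' a2m + S.pC'AE' c1' a2p + S.pC'AE' c2' a1m -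
          S.pC'AE' c2' a1p + S.pE'AE' e1' a2m + S.pE'AE' e1' a2p - S.pE'AE' e2' a1m +
          S.pE'AE' e2' a1p))

/-- The element `1⁺ ∈ 𝔞`. -/
def oneA (S : CoordSetup F n A B B' C C' E E' D L) : CoorA A C E C' E' :=
  (S.one, 0, 0, 0, 0, 0)

/-- The element `1⁺ ∈ 𝔟`. -/
def oneB (S : CoordSetup F n A B B' C C' E E' D L) : CoorB A C E C' E' B B' :=
  (S.one, 0, 0, 0, 0, 0, 0, 0)

/-- The linear transformation `γ` of `𝔞`: identity on `A⁺, E, E'` and `-1` on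
`A⁻, C, C'`. -/
def gammaA : CoorA A C E C' E' → CoorA A C E C' E' :=
  fun x => match x with
  | (ap, am, c, e, c', e') => (ap, -am, -c, e, -c', e')

/-- The linear transformation `η` of `𝔟`: it restricts to `γ` on `𝔞` and fixes `B` and
`B'`. -/
def etaB : CoorB A C E C' E' B B' → CoorB A C E C' E' B B' :=
  fun x => match x with
  | (ap, am, c, e, c', e', b, b') => (ap, -am, -c, e, -c', e', b, b')

/-- The embedding `𝔞 → 𝔟`. -/
def iaB : CoorA A C E C' E' → CoorB A C E C' E' B B' :=
  fun x => match x with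
  | (ap, am, c, e, c', e') => (ap, am, c, e, c', e', 0, 0)

/-- The element `b + b'` of `B ⊕ B' ⊆ 𝔟`. -/
def bElem (b : B) (b' : B') : CoorB A C E C' E' B B' :=
  (0, 0, 0, 0, 0, 0, b, b')

end CoordAlgebra

end WG
namespace WG
attribute [local instance] LieRing.ofAssociativeRing

open Matrix TensorProduct

section Stmt17Aux

variable {F : Type*} [Field F] [CharZero F] {n : ℕ}
variable {A B B' C C' E E' D L : Type*}
variable [AddCommGroup A] [Module F A] [AddCommGroup B] [Module F B]
variable [AddCommGroup B'] [Module F B'] [AddCommGroup C] [Module F C]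
variable [AddCommGroup C'] [Module F C'] [AddCommGroup E] [Module F E]
variable [AddCommGroup E'] [Module F E'] [AddCommGroup D] [Module F D]
variable [LieRing L] [LieAlgebra F L]

/-- Entry functional on `sl_{n+1}`. -/
def phiSl (i j : Fin (n + 1)) : (slL F (n + 1)) →ₗ[F] F where
  toFun x := (x : MatN F n) i j
  map_add' _ _ := rfl
  map_smul' _ _ := rfl

/-- Entry functional on symmetric matrices. -/
def phiSym (i j : Fin (n + 1)) : (symM F (n + 1)) →ₗ[F] F where
  toFun x := (x : MatN F n) i j
  map_add' _ _ := rfl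
  map_smul' _ _ := rfl

/-- Entry functional on skew matrices. -/
def phiSkew (i j : Fin (n + 1)) : (skewM F (n + 1)) →ₗ[F] F where
  toFun x := (x : MatN F n) i j
  map_add' _ _ := rfl
  map_smul' _ _ := rfl

/-- Coordinate functional on `F^{n+1}`. -/
def phiV (i : Fin (n + 1)) : (Fin (n + 1) → F) →ₗ[F] F := LinearMap.proj i

lemma phiSl_apply (i j : Fin (n + 1)) (x : slL F (n + 1)) :
    phiSl i j x = (x : MatN F n) i j := rfl

lemma phiSym_apply (i j : Fin (n + 1)) (x : symM F (n + 1)) :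
    phiSym i j x = (x : MatN F n) i j := rfl

lemma phiSkew_apply (i j : Fin (n + 1)) (x : skewM F (n + 1)) :
    phiSkew i j x = (x : MatN F n) i j := rfl

/-- Evaluation of a tensor against a functional on the first factor. -/
noncomputable def evT {M N : Type*} [AddCommGroup M] [Module F M]
    [AddCommGroup N] [Module F N] (φ : M →ₗ[F] F) : (M ⊗[F] N) →ₗ[F] N :=
  (TensorProduct.lid F N).toLinearMap ∘ₗ φ.rTensor N

@[simp] lemma evT_tmul {M N : Type*} [AddCommGroup M] [Module F M]
    [AddCommGroup N] [Module F N] (φ : M →ₗ[F] F) (m : M) (x : N) :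
    evT φ (m ⊗ₜ[F] x) = φ m • x := by
  simp [evT]

lemma totalMap_tuple
    (ιg : slL F (n + 1) →ₗ[F] A →ₗ[F] L)
    (ιV : (Fin (n + 1) → F) →ₗ[F] B →ₗ[F] L)
    (ιV' : (Fin (n + 1) → F) →ₗ[F] B' →ₗ[F] L)
    (ιS : symM F (n + 1) →ₗ[F] C →ₗ[F] L)
    (ιS' : symM F (n + 1) →ₗ[F] C' →ₗ[F] L)
    (ιE : skewM F (n + 1) →ₗ[F] E →ₗ[F] L)
    (ιE' : skewM F (n + 1) →ₗ[F] E' →ₗ[F] L)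
    (ιD : D →ₗ[F] L)
    (t1 : ↥(slL F (n + 1)) ⊗[F] A) (t2 : (Fin (n + 1) → F) ⊗[F] B)
    (t3 : (Fin (n + 1) → F) ⊗[F] B') (t4 : ↥(symM F (n + 1)) ⊗[F] C)
    (t5 : ↥(symM F (n + 1)) ⊗[F] C') (t6 : ↥(skewM F (n + 1)) ⊗[F] E)
    (t7 : ↥(skewM F (n + 1)) ⊗[F] E') (t8 : D) :
    totalMap ιg ιV ιV' ιS ιS' ιE ιE' ιD (t1, t2, t3, t4, t5, t6, t7, t8) =
      TensorProduct.lift ιg t1 + TensorProduct.lift ιV t2 + TensorProduct.lift ιV' t3 +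
        TensorProduct.lift ιS t4 + TensorProduct.lift ιS' t5 + TensorProduct.lift ιE t6 +
        TensorProduct.lift ιE' t7 + ιD t8 := by
  simp [totalMap, add_assoc]

end Stmt17Aux

end WG
namespace WG
attribute [local instance] LieRing.ofAssociativeRing
open Matrix TensorProduct
section Stmt17Aux2

set_option linter.unusedSectionVars false

variable {F : Type*} [Field F] [CharZero F] {n : ℕ}

@[simp] lemma std_transpose {m : ℕ} (i j : Fin m) (c : F) :
    (Matrix.single i j c)ᵀ = Matrix.single j i c := by
  ext a b
  simp [Matrix.single, Matrix.transpose_apply, and_comm]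

lemma trace_std_same {m : ℕ} (i : Fin m) (c : F) :
    Matrix.trace (Matrix.single i i c) = c := by
  rw [Matrix.trace, Matrix.diag_single_same]
  simp

lemma trace_std_ne {m : ℕ} (i j : Fin m) (h : j ≠ i) (c : F) :
    Matrix.trace (Matrix.single i j c) = 0 := by
  rw [Matrix.trace, Matrix.diag_single_of_ne i j c h.symm]
  simp

variable {A B B' C C' E E' D L : Type*}
variable [AddCommGroup A] [Module F A] [AddCommGroup B] [Module F B]
variable [AddCommGroup B'] [Module F B'] [AddCommGroup C] [Module F C]
variable [AddCommGroup C'] [Module F C'] [AddCommGroup E] [Module F E]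
variable [AddCommGroup E'] [Module F E'] [AddCommGroup D] [Module F D]
variable [LieRing L] [LieAlgebra F L]

lemma half_pACC_pACE (S : CoordSetup F n A B B' C C' E E' D L) (hn : 4 ≤ n) (c : C) :
    (2⁻¹ : F) • S.pACC S.one c = c ∧ (2⁻¹ : F) • S.pACE S.one c = 0 := by
  have h0 : (0 : ℕ) < n + 1 := by omega
  have h1 : (1 : ℕ) < n + 1 := by omega
  have h2 : (2 : ℕ) < n + 1 := by omega
  set i0 : Fin (n + 1) := ⟨0, h0⟩ with hi0
  set i1 : Fin (n + 1) := ⟨1, h1⟩ with hi1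
  set i2 : Fin (n + 1) := ⟨2, h2⟩ with hi2
  have ne01 : i0 ≠ i1 := by simp [hi0, hi1, Fin.ext_iff]
  have ne02 : i0 ≠ i2 := by simp [hi0, hi2, Fin.ext_iff]
  have ne12 : i1 ≠ i2 := by simp [hi1, hi2, Fin.ext_iff]
  set x : slL F (n + 1) :=
    ⟨Matrix.single i0 i0 1 - Matrix.single i1 i1 1, by
      show Matrix.trace _ = 0
      rw [Matrix.trace_sub, trace_std_same, trace_std_same, sub_self]⟩ with hx
  set s : symM F (n + 1) :=
    ⟨Matrix.single i0 i2 1 + Matrix.single i2 i0 1, by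
      show _ᵀ = _
      rw [Matrix.transpose_add, std_transpose, std_transpose]
      exact add_comm _ _⟩ with hs
  have key := (S.rel_gS x S.one s c).symm.trans (S.one_gS x s c)
  have hTM : totalMap S.ιg S.ιV S.ιV' S.ιS S.ιS' S.ιE S.ιE' S.ιD
      (0, 0, 0, symAct (x : MatN F n) s ⊗ₜ[F] ((2⁻¹ : F) • S.pACC S.one c), 0,
        symActSkew (x : MatN F n) s ⊗ₜ[F] ((2⁻¹ : F) • S.pACE S.one c), 0, 0) =
      totalMap S.ιg S.ιV S.ιV' S.ιS S.ιS' S.ιE S.ιE' S.ιD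
      (0, 0, 0, symAct (x : MatN F n) s ⊗ₜ[F] c, 0, 0, 0, 0) := by
    rw [totalMap_tuple, totalMap_tuple]
    simpa [lift.tmul] using key
  have hinj := S.bij.injective hTM
  rw [Prod.ext_iff, Prod.ext_iff, Prod.ext_iff, Prod.ext_iff, Prod.ext_iff,
    Prod.ext_iff, Prod.ext_iff] at hinj
  obtain ⟨-, -, -, h4, -, h6, -, -⟩ := hinj
  have hsymAct : (symAct (x : MatN F n) s : MatN F n) i0 i2 = 1 := by
    show ((x : MatN F n) * (s : MatN F n) + (s : MatN F n) * (x : MatN F n)ᵀ) i0 i2 = 1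
    rw [hx, hs]
    simp only [Matrix.transpose_sub, std_transpose, Matrix.sub_mul, Matrix.mul_sub,
      Matrix.add_mul, Matrix.mul_add, Matrix.single_mul_single_same,
      Matrix.single_mul_single_of_ne (h := ne02), Matrix.single_mul_single_of_ne (h := ne02.symm),
      Matrix.single_mul_single_of_ne (h := ne01), Matrix.single_mul_single_of_ne (h := ne01.symm),
      Matrix.single_mul_single_of_ne (h := ne12), Matrix.single_mul_single_of_ne (h := ne12.symm)]
    simp [ne01, ne01.symm, ne02, ne02.symm, ne12, ne12.symm]
  have hsymSkew : (symActSkew (x : MatN F n) s : MatN F n) i0 i2 = 1 := by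
    show ((x : MatN F n) * (s : MatN F n) - (s : MatN F n) * (x : MatN F n)ᵀ) i0 i2 = 1
    rw [hx, hs]
    simp only [Matrix.transpose_sub, std_transpose, Matrix.sub_mul, Matrix.mul_sub,
      Matrix.add_mul, Matrix.mul_add, Matrix.single_mul_single_same,
      Matrix.single_mul_single_of_ne (h := ne02), Matrix.single_mul_single_of_ne (h := ne02.symm),
      Matrix.single_mul_single_of_ne (h := ne01), Matrix.single_mul_single_of_ne (h := ne01.symm),
      Matrix.single_mul_single_of_ne (h := ne12), Matrix.single_mul_single_of_ne (h := ne12.symm)]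
    simp [ne01, ne01.symm, ne02, ne02.symm, ne12, ne12.symm]
  constructor
  · have := congrArg (evT (phiSym i0 i2)) h4
    simpa [evT_tmul, phiSym_apply, hsymAct] using this
  · have := congrArg (evT (phiSkew i0 i2)) h6
    simpa [evT_tmul, phiSkew_apply, hsymSkew] using this

end Stmt17Aux2
end WG
namespace WG
attribute [local instance] LieRing.ofAssociativeRing
open Matrix TensorProduct
section Stmt17Aux3

set_option linter.unusedSectionVars false
set_option maxHeartbeats 1000000

variable {F : Type*} [Field F] [CharZero F] {n : ℕ}
variable {A B B' C C' E E' D L : Type*}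
variable [AddCommGroup A] [Module F A] [AddCommGroup B] [Module F B]
variable [AddCommGroup B'] [Module F B'] [AddCommGroup C] [Module F C]
variable [AddCommGroup C'] [Module F C'] [AddCommGroup E] [Module F E]
variable [AddCommGroup E'] [Module F E'] [AddCommGroup D] [Module F D]
variable [LieRing L] [LieAlgebra F L]

lemma half_brA_circA (S : CoordSetup F n A B B' C C' E E' D L) (hn : 4 ≤ n) (a : A) :
    ((2⁻¹ : F) • S.brA S.one a = 0 ∧ (2⁻¹ : F) • S.circA S.one a = a) ∧
    ((2⁻¹ : F) • S.brA a S.one = 0 ∧ (2⁻¹ : F) • S.circA a S.one = a) := by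
  have h0 : (0 : ℕ) < n + 1 := by omega
  have h1 : (1 : ℕ) < n + 1 := by omega
  have h2 : (2 : ℕ) < n + 1 := by omega
  set i0 : Fin (n + 1) := ⟨0, h0⟩ with hi0
  set i1 : Fin (n + 1) := ⟨1, h1⟩ with hi1
  set i2 : Fin (n + 1) := ⟨2, h2⟩ with hi2
  have ne01 : i0 ≠ i1 := by simp [hi0, hi1, Fin.ext_iff]
  have ne02 : i0 ≠ i2 := by simp [hi0, hi2, Fin.ext_iff]
  have ne12 : i1 ≠ i2 := by simp [hi1, hi2, Fin.ext_iff]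
  set x : slL F (n + 1) :=
    ⟨Matrix.single i0 i1 1, by
      show Matrix.trace _ = 0
      exact trace_std_ne i0 i1 ne01.symm 1⟩ with hx
  set y : slL F (n + 1) :=
    ⟨Matrix.single i1 i0 1, by
      show Matrix.trace _ = 0
      exact trace_std_ne i1 i0 ne01 1⟩ with hy
  -- entries of the relevant sl-elements
  have hcxy : ∀ i j : Fin (n + 1),
      (circSl x y : MatN F n) i j =
        Matrix.single i0 i0 (1:F) i j + Matrix.single i1 i1 1 i j
          - (2 / ((n + 1 : ℕ) : F)) * (1 : MatN F n) i j := by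
    intro i j
    show (((x : MatN F n) * (y : MatN F n) + (y : MatN F n) * (x : MatN F n))
        - (Matrix.trace ((x : MatN F n) * (y : MatN F n) + (y : MatN F n) * (x : MatN F n)) / ((n + 1 : ℕ) : F))
          • (1 : MatN F n)) i j = _
    rw [hx, hy]
    simp only [Matrix.single_mul_single_same, one_mul]
    rw [Matrix.trace_add, trace_std_same, trace_std_same]
    simp only [Matrix.sub_apply, Matrix.smul_apply, smul_eq_mul]
    norm_num
  have hcyx : ∀ i j : Fin (n + 1),
      (circSl y x : MatN F n) i j =
        Matrix.single i0 i0 (1:F) i j + Matrix.single i1 i1 1 i j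
          - (2 / ((n + 1 : ℕ) : F)) * (1 : MatN F n) i j := by
    intro i j
    show (((y : MatN F n) * (x : MatN F n) + (x : MatN F n) * (y : MatN F n))
        - (Matrix.trace ((y : MatN F n) * (x : MatN F n) + (x : MatN F n) * (y : MatN F n)) / ((n + 1 : ℕ) : F))
          • (1 : MatN F n)) i j = _
    rw [hx, hy]
    simp only [Matrix.single_mul_single_same, one_mul]
    rw [Matrix.trace_add, trace_std_same, trace_std_same]
    simp only [Matrix.sub_apply, Matrix.smul_apply, Matrix.add_apply, smul_eq_mul]
    ring
  have hbxy : ((⁅x, y⁆ : slL F (n + 1)) : MatN F n) =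
      Matrix.single i0 i0 (1:F) - Matrix.single i1 i1 1 := by
    rw [LieSubalgebra.coe_bracket, Ring.lie_def, hx, hy]
    simp only [Matrix.single_mul_single_same, one_mul]
  have hbyx : ((⁅y, x⁆ : slL F (n + 1)) : MatN F n) =
      Matrix.single i1 i1 (1:F) - Matrix.single i0 i0 1 := by
    rw [LieSubalgebra.coe_bracket, Ring.lie_def, hx, hy]
    simp only [Matrix.single_mul_single_same, one_mul]
  have hfrac : (2 / ((n + 1 : ℕ) : F)) ≠ 0 :=
    div_ne_zero two_ne_zero (nsucc_ne_zero F n)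
  constructor
  · -- left: 1 ∘ a etc.
    have key := (S.rel_gg x y S.one a).symm.trans (S.one_gg x y a)
    have hTM : totalMap S.ιg S.ιV S.ιV' S.ιS S.ιS' S.ιE S.ιE' S.ιD
        (circSl x y ⊗ₜ[F] ((2⁻¹ : F) • S.brA S.one a) +
           ⁅x, y⁆ ⊗ₜ[F] ((2⁻¹ : F) • S.circA S.one a), 0, 0, 0, 0, 0, 0,
          traceF (x : MatN F n) (y : MatN F n) • S.dA S.one a) =
        totalMap S.ιg S.ιV S.ιV' S.ιS S.ιS' S.ιE S.ιE' S.ιD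
        (⁅x, y⁆ ⊗ₜ[F] a, 0, 0, 0, 0, 0, 0, 0) := by
      rw [totalMap_tuple, totalMap_tuple]
      simpa [lift.tmul] using key
    have hinj := S.bij.injective hTM
    rw [Prod.ext_iff] at hinj
    obtain ⟨h1', -⟩ := hinj
    have hp : (2⁻¹ : F) • S.brA S.one a = 0 := by
      have := congrArg (evT (phiSl i2 i2)) h1'
      simp only [map_add, evT_tmul, phiSl_apply] at this
      rw [hcxy, hbxy] at this
      simp only [ne01, ne01.symm, ne02, ne02.symm, ne12, ne12.symm, ne_eq, Matrix.sub_apply, Matrix.add_apply,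
        Matrix.single_apply_of_ne, Matrix.one_apply_eq, mul_one, not_false_eq_true,
        and_false, false_and, not_and, zero_add, add_zero, zero_sub, sub_self,
        zero_smul, neg_smul, neg_eq_zero, smul_eq_zero, smul_zero,
        Matrix.single_apply_of_row_ne, Matrix.single_apply_of_col_ne] at this
      rcases this with h | h
      · exact absurd h hfrac
      · rcases h with h | h
        · exact absurd h (inv_ne_zero two_ne_zero)
        · rw [h, smul_zero]
    refine ⟨hp, ?_⟩
    have := congrArg (evT (phiSl i0 i0)) h1'
    simp only [map_add, evT_tmul, phiSl_apply] at this
    rw [hcxy, hbxy, hp] at this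
    simp only [ne01, ne01.symm, ne_eq, Matrix.sub_apply, Matrix.add_apply, Matrix.single_apply_same,
      Matrix.single_apply_of_row_ne, Matrix.single_apply_of_col_ne,
      not_false_eq_true, Matrix.one_apply_eq, smul_zero, zero_add, add_zero, sub_zero,
      one_smul] at this
    simpa using this
  · -- right: a ∘ 1 etc.
    have e1 : ⁅S.ιg y a, S.ιg x S.one⁆ = S.ιg ⁅y, x⁆ a := by
      calc ⁅S.ιg y a, S.ιg x S.one⁆ = -⁅S.ιg x S.one, S.ιg y a⁆ := (lie_skew _ _).symm
        _ = -S.ιg ⁅x, y⁆ a := by rw [S.one_gg x y a]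
        _ = S.ιg ⁅y, x⁆ a := by
            rw [← lie_skew y x, map_neg, LinearMap.neg_apply]
    have key := (S.rel_gg y x a S.one).symm.trans e1
    have hTM : totalMap S.ιg S.ιV S.ιV' S.ιS S.ιS' S.ιE S.ιE' S.ιD
        (circSl y x ⊗ₜ[F] ((2⁻¹ : F) • S.brA a S.one) +
           ⁅y, x⁆ ⊗ₜ[F] ((2⁻¹ : F) • S.circA a S.one), 0, 0, 0, 0, 0, 0,
          traceF (y : MatN F n) (x : MatN F n) • S.dA a S.one) =
        totalMap S.ιg S.ιV S.ιV' S.ιS S.ιS' S.ιE S.ιE' S.ιD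
        (⁅y, x⁆ ⊗ₜ[F] a, 0, 0, 0, 0, 0, 0, 0) := by
      rw [totalMap_tuple, totalMap_tuple]
      simpa [lift.tmul] using key
    have hinj := S.bij.injective hTM
    rw [Prod.ext_iff] at hinj
    obtain ⟨h1', -⟩ := hinj
    have hp : (2⁻¹ : F) • S.brA a S.one = 0 := by
      have := congrArg (evT (phiSl i2 i2)) h1'
      simp only [map_add, evT_tmul, phiSl_apply] at this
      rw [hcyx, hbyx] at this
      simp only [ne01, ne01.symm, ne02, ne02.symm, ne12, ne12.symm, ne_eq, Matrix.sub_apply, Matrix.add_apply,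
        Matrix.single_apply_of_ne, Matrix.one_apply_eq, mul_one, not_false_eq_true,
        and_false, false_and, not_and, zero_add, add_zero, zero_sub, sub_self,
        zero_smul, neg_smul, neg_eq_zero, smul_eq_zero, smul_zero,
        Matrix.single_apply_of_row_ne, Matrix.single_apply_of_col_ne] at this
      rcases this with h | h
      · exact absurd h hfrac
      · rcases h with h | h
        · exact absurd h (inv_ne_zero two_ne_zero)
        · rw [h, smul_zero]
    refine ⟨hp, ?_⟩
    have := congrArg (evT (phiSl i0 i0)) h1'
    simp only [map_add, evT_tmul, phiSl_apply] at this
    rw [hcyx, hbyx, hp] at this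
    simp only [ne01, ne01.symm, ne_eq, Matrix.sub_apply, Matrix.add_apply, Matrix.single_apply_same,
      Matrix.single_apply_of_row_ne, Matrix.single_apply_of_col_ne,
      not_false_eq_true, Matrix.one_apply_eq, smul_zero, zero_add, add_zero, sub_zero,
      one_smul, zero_sub, neg_smul, neg_inj] at this
    simpa using this

end Stmt17Aux3
end WG
namespace WG
attribute [local instance] LieRing.ofAssociativeRing
open Matrix TensorProduct
section Stmt17Aux4

set_option linter.unusedSectionVars false
set_option maxHeartbeats 1000000

variable {F : Type*} [Field F] [CharZero F] {n : ℕ}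
variable {A B B' C C' E E' D L : Type*}
variable [AddCommGroup A] [Module F A] [AddCommGroup B] [Module F B]
variable [AddCommGroup B'] [Module F B'] [AddCommGroup C] [Module F C]
variable [AddCommGroup C'] [Module F C'] [AddCommGroup E] [Module F E]
variable [AddCommGroup E'] [Module F E'] [AddCommGroup D] [Module F D]
variable [LieRing L] [LieAlgebra F L]

lemma half_pAEE_pAEC (S : CoordSetup F n A B B' C C' E E' D L) (hn : 4 ≤ n) (e : E) :
    (2⁻¹ : F) • S.pAEE S.one e = e ∧ (2⁻¹ : F) • S.pAEC S.one e = 0 := by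
  have h0 : (0 : ℕ) < n + 1 := by omega
  have h1 : (1 : ℕ) < n + 1 := by omega
  have h2 : (2 : ℕ) < n + 1 := by omega
  set i0 : Fin (n + 1) := ⟨0, h0⟩ with hi0
  set i1 : Fin (n + 1) := ⟨1, h1⟩ with hi1
  set i2 : Fin (n + 1) := ⟨2, h2⟩ with hi2
  have ne01 : i0 ≠ i1 := by simp [hi0, hi1, Fin.ext_iff]
  have ne02 : i0 ≠ i2 := by simp [hi0, hi2, Fin.ext_iff]
  have ne12 : i1 ≠ i2 := by simp [hi1, hi2, Fin.ext_iff]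
  set x : slL F (n + 1) :=
    ⟨Matrix.single i0 i0 1 - Matrix.single i1 i1 1, by
      show Matrix.trace _ = 0
      rw [Matrix.trace_sub, trace_std_same, trace_std_same, sub_self]⟩ with hx
  set l : skewM F (n + 1) :=
    ⟨Matrix.single i0 i2 1 - Matrix.single i2 i0 1, by
      show _ᵀ = _
      rw [Matrix.transpose_sub, std_transpose, std_transpose]
      exact (neg_sub _ _).symm⟩ with hl
  have key := (S.rel_gL x S.one l e).symm.trans (S.one_gL x l e)
  have hTM : totalMap S.ιg S.ιV S.ιV' S.ιS S.ιS' S.ιE S.ιE' S.ιD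
      (0, 0, 0, skewActSym (x : MatN F n) l ⊗ₜ[F] ((2⁻¹ : F) • S.pAEC S.one e), 0,
        skewAct (x : MatN F n) l ⊗ₜ[F] ((2⁻¹ : F) • S.pAEE S.one e), 0, 0) =
      totalMap S.ιg S.ιV S.ιV' S.ιS S.ιS' S.ιE S.ιE' S.ιD
      (0, 0, 0, 0, 0, skewAct (x : MatN F n) l ⊗ₜ[F] e, 0, 0) := by
    rw [totalMap_tuple, totalMap_tuple]
    simp only [map_zero, add_zero, zero_add, lift.tmul]
    rw [add_comm]
    exact key
  have hinj := S.bij.injective hTM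
  rw [Prod.ext_iff, Prod.ext_iff, Prod.ext_iff, Prod.ext_iff, Prod.ext_iff,
    Prod.ext_iff, Prod.ext_iff] at hinj
  obtain ⟨-, -, -, h4, -, h6, -, -⟩ := hinj
  have hAct : (skewAct (x : MatN F n) l : MatN F n) i0 i2 = 1 := by
    show ((x : MatN F n) * (l : MatN F n) + (l : MatN F n) * (x : MatN F n)ᵀ) i0 i2 = 1
    rw [hx, hl]
    simp only [Matrix.transpose_sub, std_transpose, Matrix.sub_mul, Matrix.mul_sub,
      Matrix.add_mul, Matrix.mul_add, Matrix.single_mul_single_same,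
      Matrix.single_mul_single_of_ne (h := ne02), Matrix.single_mul_single_of_ne (h := ne02.symm),
      Matrix.single_mul_single_of_ne (h := ne01), Matrix.single_mul_single_of_ne (h := ne01.symm),
      Matrix.single_mul_single_of_ne (h := ne12), Matrix.single_mul_single_of_ne (h := ne12.symm)]
    simp [ne01, ne01.symm, ne02, ne02.symm, ne12, ne12.symm]
  have hSym : (skewActSym (x : MatN F n) l : MatN F n) i0 i2 = 1 := by
    show ((x : MatN F n) * (l : MatN F n) - (l : MatN F n) * (x : MatN F n)ᵀ) i0 i2 = 1
    rw [hx, hl]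
    simp only [Matrix.transpose_sub, std_transpose, Matrix.sub_mul, Matrix.mul_sub,
      Matrix.add_mul, Matrix.mul_add, Matrix.single_mul_single_same,
      Matrix.single_mul_single_of_ne (h := ne02), Matrix.single_mul_single_of_ne (h := ne02.symm),
      Matrix.single_mul_single_of_ne (h := ne01), Matrix.single_mul_single_of_ne (h := ne01.symm),
      Matrix.single_mul_single_of_ne (h := ne12), Matrix.single_mul_single_of_ne (h := ne12.symm)]
    simp [ne01, ne01.symm, ne02, ne02.symm, ne12, ne12.symm]
  constructor
  · have := congrArg (evT (phiSkew i0 i2)) h6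
    simpa [evT_tmul, phiSkew_apply, hAct] using this
  · have := congrArg (evT (phiSym i0 i2)) h4
    simpa [evT_tmul, phiSym_apply, hSym] using this

lemma half_pC'AC'_pC'AE' (S : CoordSetup F n A B B' C C' E E' D L) (hn : 4 ≤ n) (c' : C') :
    (2⁻¹ : F) • S.pC'AC' c' S.one = c' ∧ (2⁻¹ : F) • S.pC'AE' c' S.one = 0 := by
  have h0 : (0 : ℕ) < n + 1 := by omega
  have h1 : (1 : ℕ) < n + 1 := by omega
  have h2 : (2 : ℕ) < n + 1 := by omega
  set i0 : Fin (n + 1) := ⟨0, h0⟩ with hi0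
  set i1 : Fin (n + 1) := ⟨1, h1⟩ with hi1
  set i2 : Fin (n + 1) := ⟨2, h2⟩ with hi2
  have ne01 : i0 ≠ i1 := by simp [hi0, hi1, Fin.ext_iff]
  have ne02 : i0 ≠ i2 := by simp [hi0, hi2, Fin.ext_iff]
  have ne12 : i1 ≠ i2 := by simp [hi1, hi2, Fin.ext_iff]
  set x : slL F (n + 1) :=
    ⟨Matrix.single i0 i0 1 - Matrix.single i1 i1 1, by
      show Matrix.trace _ = 0
      rw [Matrix.trace_sub, trace_std_same, trace_std_same, sub_self]⟩ with hx
  set s' : symM F (n + 1) :=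
    ⟨Matrix.single i0 i2 1 + Matrix.single i2 i0 1, by
      show _ᵀ = _
      rw [Matrix.transpose_add, std_transpose, std_transpose]
      exact add_comm _ _⟩ with hs
  have e1 : ⁅S.ιS' s' c', S.ιg x S.one⁆ = S.ιS' (symActR s' (x : MatN F n)) c' := by
    calc ⁅S.ιS' s' c', S.ιg x S.one⁆ = -⁅S.ιg x S.one, S.ιS' s' c'⁆ := (lie_skew _ _).symm
      _ = -(-S.ιS' (symActR s' (x : MatN F n)) c') := by rw [S.one_gS']
      _ = _ := neg_neg _
  have key := (S.rel_S'g s' c' x S.one).symm.trans e1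
  have hTM : totalMap S.ιg S.ιV S.ιV' S.ιS S.ιS' S.ιE S.ιE' S.ιD
      (0, 0, 0, 0, symActR s' (x : MatN F n) ⊗ₜ[F] ((2⁻¹ : F) • S.pC'AC' c' S.one), 0,
        symActRSkew s' (x : MatN F n) ⊗ₜ[F] ((2⁻¹ : F) • S.pC'AE' c' S.one), 0) =
      totalMap S.ιg S.ιV S.ιV' S.ιS S.ιS' S.ιE S.ιE' S.ιD
      (0, 0, 0, 0, symActR s' (x : MatN F n) ⊗ₜ[F] c', 0, 0, 0) := by
    rw [totalMap_tuple, totalMap_tuple]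
    simpa [lift.tmul] using key
  have hinj := S.bij.injective hTM
  rw [Prod.ext_iff, Prod.ext_iff, Prod.ext_iff, Prod.ext_iff, Prod.ext_iff,
    Prod.ext_iff, Prod.ext_iff] at hinj
  obtain ⟨-, -, -, -, h5, -, h7, -⟩ := hinj
  have hAct : (symActR s' (x : MatN F n) : MatN F n) i0 i2 = 1 := by
    show ((s' : MatN F n) * (x : MatN F n) + (x : MatN F n)ᵀ * (s' : MatN F n)) i0 i2 = 1
    rw [hx, hs]
    simp only [Matrix.transpose_sub, std_transpose, Matrix.sub_mul, Matrix.mul_sub,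
      Matrix.add_mul, Matrix.mul_add, Matrix.single_mul_single_same,
      Matrix.single_mul_single_of_ne (h := ne02), Matrix.single_mul_single_of_ne (h := ne02.symm),
      Matrix.single_mul_single_of_ne (h := ne01), Matrix.single_mul_single_of_ne (h := ne01.symm),
      Matrix.single_mul_single_of_ne (h := ne12), Matrix.single_mul_single_of_ne (h := ne12.symm)]
    simp [ne01, ne01.symm, ne02, ne02.symm, ne12, ne12.symm]
  have hSk : (symActRSkew s' (x : MatN F n) : MatN F n) i2 i0 = 1 := by
    show ((s' : MatN F n) * (x : MatN F n) - (x : MatN F n)ᵀ * (s' : MatN F n)) i2 i0 = 1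
    rw [hx, hs]
    simp only [Matrix.transpose_sub, std_transpose, Matrix.sub_mul, Matrix.mul_sub,
      Matrix.add_mul, Matrix.mul_add, Matrix.single_mul_single_same,
      Matrix.single_mul_single_of_ne (h := ne02), Matrix.single_mul_single_of_ne (h := ne02.symm),
      Matrix.single_mul_single_of_ne (h := ne01), Matrix.single_mul_single_of_ne (h := ne01.symm),
      Matrix.single_mul_single_of_ne (h := ne12), Matrix.single_mul_single_of_ne (h := ne12.symm)]
    simp [ne01, ne01.symm, ne02, ne02.symm, ne12, ne12.symm]
  constructor
  · have := congrArg (evT (phiSym i0 i2)) h5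
    simpa [evT_tmul, phiSym_apply, hAct] using this
  · have := congrArg (evT (phiSkew i2 i0)) h7
    simpa [evT_tmul, phiSkew_apply, hSk] using this

lemma half_pE'AE'_pE'AC' (S : CoordSetup F n A B B' C C' E E' D L) (hn : 4 ≤ n) (e' : E') :
    (2⁻¹ : F) • S.pE'AE' e' S.one = e' ∧ (2⁻¹ : F) • S.pE'AC' e' S.one = 0 := by
  have h0 : (0 : ℕ) < n + 1 := by omega
  have h1 : (1 : ℕ) < n + 1 := by omega
  have h2 : (2 : ℕ) < n + 1 := by omega
  set i0 : Fin (n + 1) := ⟨0, h0⟩ with hi0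
  set i1 : Fin (n + 1) := ⟨1, h1⟩ with hi1
  set i2 : Fin (n + 1) := ⟨2, h2⟩ with hi2
  have ne01 : i0 ≠ i1 := by simp [hi0, hi1, Fin.ext_iff]
  have ne02 : i0 ≠ i2 := by simp [hi0, hi2, Fin.ext_iff]
  have ne12 : i1 ≠ i2 := by simp [hi1, hi2, Fin.ext_iff]
  set x : slL F (n + 1) :=
    ⟨Matrix.single i0 i0 1 - Matrix.single i1 i1 1, by
      show Matrix.trace _ = 0
      rw [Matrix.trace_sub, trace_std_same, trace_std_same, sub_self]⟩ with hx
  set l' : skewM F (n + 1) :=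
    ⟨Matrix.single i0 i2 1 - Matrix.single i2 i0 1, by
      show _ᵀ = _
      rw [Matrix.transpose_sub, std_transpose, std_transpose]
      exact (neg_sub _ _).symm⟩ with hl
  have e1 : ⁅S.ιE' l' e', S.ιg x S.one⁆ = S.ιE' (skewActR l' (x : MatN F n)) e' := by
    calc ⁅S.ιE' l' e', S.ιg x S.one⁆ = -⁅S.ιg x S.one, S.ιE' l' e'⁆ := (lie_skew _ _).symm
      _ = -(-S.ιE' (skewActR l' (x : MatN F n)) e') := by rw [S.one_gL']
      _ = _ := neg_neg _
  have key := (S.rel_L'g l' e' x S.one).symm.trans e1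
  have hTM : totalMap S.ιg S.ιV S.ιV' S.ιS S.ιS' S.ιE S.ιE' S.ιD
      (0, 0, 0, 0, skewActRSym l' (x : MatN F n) ⊗ₜ[F] ((2⁻¹ : F) • S.pE'AC' e' S.one), 0,
        skewActR l' (x : MatN F n) ⊗ₜ[F] ((2⁻¹ : F) • S.pE'AE' e' S.one), 0) =
      totalMap S.ιg S.ιV S.ιV' S.ιS S.ιS' S.ιE S.ιE' S.ιD
      (0, 0, 0, 0, 0, 0, skewActR l' (x : MatN F n) ⊗ₜ[F] e', 0) := by
    rw [totalMap_tuple, totalMap_tuple]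
    simp only [map_zero, add_zero, zero_add, lift.tmul]
    rw [add_comm]
    exact key
  have hinj := S.bij.injective hTM
  rw [Prod.ext_iff, Prod.ext_iff, Prod.ext_iff, Prod.ext_iff, Prod.ext_iff,
    Prod.ext_iff, Prod.ext_iff] at hinj
  obtain ⟨-, -, -, -, h5, -, h7, -⟩ := hinj
  have hAct : (skewActR l' (x : MatN F n) : MatN F n) i0 i2 = 1 := by
    show ((l' : MatN F n) * (x : MatN F n) + (x : MatN F n)ᵀ * (l' : MatN F n)) i0 i2 = 1
    rw [hx, hl]
    simp only [Matrix.transpose_sub, std_transpose, Matrix.sub_mul, Matrix.mul_sub,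
      Matrix.add_mul, Matrix.mul_add, Matrix.single_mul_single_same,
      Matrix.single_mul_single_of_ne (h := ne02), Matrix.single_mul_single_of_ne (h := ne02.symm),
      Matrix.single_mul_single_of_ne (h := ne01), Matrix.single_mul_single_of_ne (h := ne01.symm),
      Matrix.single_mul_single_of_ne (h := ne12), Matrix.single_mul_single_of_ne (h := ne12.symm)]
    simp [ne01, ne01.symm, ne02, ne02.symm, ne12, ne12.symm]
  have hSk : (skewActRSym l' (x : MatN F n) : MatN F n) i2 i0 = -1 := by
    show ((l' : MatN F n) * (x : MatN F n) - (x : MatN F n)ᵀ * (l' : MatN F n)) i2 i0 = -1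
    rw [hx, hl]
    simp only [Matrix.transpose_sub, std_transpose, Matrix.sub_mul, Matrix.mul_sub,
      Matrix.add_mul, Matrix.mul_add, Matrix.single_mul_single_same,
      Matrix.single_mul_single_of_ne (h := ne02), Matrix.single_mul_single_of_ne (h := ne02.symm),
      Matrix.single_mul_single_of_ne (h := ne01), Matrix.single_mul_single_of_ne (h := ne01.symm),
      Matrix.single_mul_single_of_ne (h := ne12), Matrix.single_mul_single_of_ne (h := ne12.symm)]
    simp [ne01, ne01.symm, ne02, ne02.symm, ne12, ne12.symm]
  constructor
  · have := congrArg (evT (phiSkew i0 i2)) h7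
    simpa [evT_tmul, phiSkew_apply, hAct] using this
  · have := congrArg (evT (phiSym i2 i0)) h5
    have h' := this
    simp only [evT_tmul, phiSym_apply, hSk, map_zero] at h'
    rw [neg_smul, one_smul, neg_eq_zero] at h'
    exact h'

lemma pAB_one (S : CoordSetup F n A B B' C C' E E' D L) (hn : 4 ≤ n) (b : B) :
    S.pAB S.one b = b := by
  have h0 : (0 : ℕ) < n + 1 := by omega
  have h1 : (1 : ℕ) < n + 1 := by omega
  set i0 : Fin (n + 1) := ⟨0, h0⟩ with hi0
  set i1 : Fin (n + 1) := ⟨1, h1⟩ with hi1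
  have ne01 : i0 ≠ i1 := by simp [hi0, hi1, Fin.ext_iff]
  set x : slL F (n + 1) :=
    ⟨Matrix.single i0 i0 1 - Matrix.single i1 i1 1, by
      show Matrix.trace _ = 0
      rw [Matrix.trace_sub, trace_std_same, trace_std_same, sub_self]⟩ with hx
  set u : Fin (n + 1) → F := Pi.single i0 1 with hu
  have key := (S.rel_gV x S.one u b).symm.trans (S.one_gV x u b)
  have hTM : totalMap S.ιg S.ιV S.ιV' S.ιS S.ιS' S.ιE S.ιE' S.ιD
      (0, ((x : MatN F n) *ᵥ u) ⊗ₜ[F] S.pAB S.one b, 0, 0, 0, 0, 0, 0) =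
      totalMap S.ιg S.ιV S.ιV' S.ιS S.ιS' S.ιE S.ιE' S.ιD
      (0, ((x : MatN F n) *ᵥ u) ⊗ₜ[F] b, 0, 0, 0, 0, 0, 0) := by
    rw [totalMap_tuple, totalMap_tuple]
    simpa [lift.tmul] using key
  have hinj := S.bij.injective hTM
  rw [Prod.ext_iff, Prod.ext_iff] at hinj
  obtain ⟨-, h2', -⟩ := hinj
  have hval : ((Matrix.single i0 i0 1 - Matrix.single i1 i1 1 : MatN F n)
      *ᵥ u) i0 = 1 := by
    rw [hu, Matrix.mulVec_single]
    simp [ne01, ne01.symm, Matrix.sub_apply]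
  have := congrArg (evT (phiV i0)) h2'
  simpa [evT_tmul, phiV, hx, hval] using this

lemma pB'A_one (S : CoordSetup F n A B B' C C' E E' D L) (hn : 4 ≤ n) (b' : B') :
    S.pB'A b' S.one = b' := by
  have h0 : (0 : ℕ) < n + 1 := by omega
  have h1 : (1 : ℕ) < n + 1 := by omega
  set i0 : Fin (n + 1) := ⟨0, h0⟩ with hi0
  set i1 : Fin (n + 1) := ⟨1, h1⟩ with hi1
  have ne01 : i0 ≠ i1 := by simp [hi0, hi1, Fin.ext_iff]
  set x : slL F (n + 1) :=
    ⟨Matrix.single i0 i0 1 - Matrix.single i1 i1 1, by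
      show Matrix.trace _ = 0
      rw [Matrix.trace_sub, trace_std_same, trace_std_same, sub_self]⟩ with hx
  set u : Fin (n + 1) → F := Pi.single i0 1 with hu
  have e1 : ⁅S.ιV' u b', S.ιg x S.one⁆ = S.ιV' ((x : MatN F n)ᵀ *ᵥ u) b' := by
    calc ⁅S.ιV' u b', S.ιg x S.one⁆ = -⁅S.ιg x S.one, S.ιV' u b'⁆ := (lie_skew _ _).symm
      _ = -(-S.ιV' ((x : MatN F n)ᵀ *ᵥ u) b') := by rw [S.one_gV']
      _ = _ := neg_neg _
  have key := (S.rel_V'g u b' x S.one).symm.trans e1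
  have hTM : totalMap S.ιg S.ιV S.ιV' S.ιS S.ιS' S.ιE S.ιE' S.ιD
      (0, 0, ((x : MatN F n)ᵀ *ᵥ u) ⊗ₜ[F] S.pB'A b' S.one, 0, 0, 0, 0, 0) =
      totalMap S.ιg S.ιV S.ιV' S.ιS S.ιS' S.ιE S.ιE' S.ιD
      (0, 0, ((x : MatN F n)ᵀ *ᵥ u) ⊗ₜ[F] b', 0, 0, 0, 0, 0) := by
    rw [totalMap_tuple, totalMap_tuple]
    simpa [lift.tmul] using key
  have hinj := S.bij.injective hTM
  rw [Prod.ext_iff, Prod.ext_iff, Prod.ext_iff] at hinj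
  obtain ⟨-, -, h3', -⟩ := hinj
  have hval : ((Matrix.single i0 i0 1 - Matrix.single i1 i1 1 : MatN F n)
      *ᵥ u) i0 = 1 := by
    rw [hu, Matrix.mulVec_single]
    simp [ne01, ne01.symm, Matrix.sub_apply]
  have := congrArg (evT (phiV i0)) h3'
  simpa [evT_tmul, phiV, hx, hval] using this

end Stmt17Aux4
end WG
/-- Under the stated coordinate setup, the element `1⁺` (the image
in `A⁺` of the distinguished element `1 ∈ A`) is a two-sided identity element of the
algebra `𝔟 = 𝔞 ⊕ B ⊕ B'`. -/
theorem stmt17 {F : Type*} [Field F] [CharZero F] (n : ℕ) (hn : 4 ≤ n)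
    {A B B' C C' E E' D L : Type*}
    [AddCommGroup A] [Module F A] [AddCommGroup B] [Module F B]
    [AddCommGroup B'] [Module F B'] [AddCommGroup C] [Module F C]
    [AddCommGroup C'] [Module F C'] [AddCommGroup E] [Module F E]
    [AddCommGroup E'] [Module F E'] [AddCommGroup D] [Module F D]
    [LieRing L] [LieAlgebra F L]
    (S : WG.CoordSetup F n A B B' C C' E E' D L) :
    ∀ x : WG.CoorB A C E C' E' B B',
      WG.bMul S (WG.oneB S) x = x ∧ WG.bMul S x (WG.oneB S) = x := by
  rintro ⟨ap, am, c, e, c', e', b, b'⟩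
  have hbr1 : ∀ a : A, (2⁻¹ : F) • S.brA S.one a = 0 :=
    fun a => (WG.half_brA_circA S hn a).1.1
  have hci1 : ∀ a : A, (2⁻¹ : F) • S.circA S.one a = a :=
    fun a => (WG.half_brA_circA S hn a).1.2
  have hbr2 : ∀ a : A, (2⁻¹ : F) • S.brA a S.one = 0 :=
    fun a => (WG.half_brA_circA S hn a).2.1
  have hci2 : ∀ a : A, (2⁻¹ : F) • S.circA a S.one = a :=
    fun a => (WG.half_brA_circA S hn a).2.2
  have hACC : ∀ c : C, (2⁻¹ : F) • S.pACC S.one c = c :=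
    fun c => (WG.half_pACC_pACE S hn c).1
  have hACE : ∀ c : C, (2⁻¹ : F) • S.pACE S.one c = 0 :=
    fun c => (WG.half_pACC_pACE S hn c).2
  have hAEE : ∀ e : E, (2⁻¹ : F) • S.pAEE S.one e = e :=
    fun e => (WG.half_pAEE_pAEC S hn e).1
  have hAEC : ∀ e : E, (2⁻¹ : F) • S.pAEC S.one e = 0 :=
    fun e => (WG.half_pAEE_pAEC S hn e).2
  have hCAC : ∀ c' : C', (2⁻¹ : F) • S.pC'AC' c' S.one = c' :=
    fun c' => (WG.half_pC'AC'_pC'AE' S hn c').1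
  have hCAE : ∀ c' : C', (2⁻¹ : F) • S.pC'AE' c' S.one = 0 :=
    fun c' => (WG.half_pC'AC'_pC'AE' S hn c').2
  have hEAE : ∀ e' : E', (2⁻¹ : F) • S.pE'AE' e' S.one = e' :=
    fun e' => (WG.half_pE'AE'_pE'AC' S hn e').1
  have hEAC : ∀ e' : E', (2⁻¹ : F) • S.pE'AC' e' S.one = 0 :=
    fun e' => (WG.half_pE'AE'_pE'AC' S hn e').2
  have hAB : ∀ b : B, S.pAB S.one b = b := fun b => WG.pAB_one S hn b
  have hBA : ∀ b' : B', S.pB'A b' S.one = b' := fun b' => WG.pB'A_one S hn b'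
  constructor
  · show WG.bMul S (S.one, 0, 0, 0, 0, 0, 0, 0) (ap, am, c, e, c', e', b, b') = _
    simp only [WG.bMul, map_zero, LinearMap.zero_apply, add_zero, zero_add, sub_zero,
      zero_sub, smul_add, smul_sub, smul_neg, smul_zero, neg_zero,
      hbr1, hci1, hACC, hACE, hAEE, hAEC, hCAC, hCAE, hEAE, hEAC, hAB, hBA]
  · show WG.bMul S (ap, am, c, e, c', e', b, b') (S.one, 0, 0, 0, 0, 0, 0, 0) = _
    simp only [WG.bMul, map_zero, LinearMap.zero_apply, add_zero, zero_add, sub_zero,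
      zero_sub, smul_add, smul_sub, smul_neg, smul_zero, neg_zero,
      hbr2, hci2, hACC, hACE, hAEE, hAEC, hCAC, hCAE, hEAE, hEAC, hAB, hBA]
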